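/- Let I = {i}, O = {o1, o2}, and let M1 be the TFSM with timeouts with states {q0, q1}, initial state q0, timeouts Δ(q0) = (q1, 1) and Δ(q1) = (q0, 1), and transitions (q0, i, o1, q0) and (q1, i, o2, q1). Then there is no complete deterministic TFSM with timed guards whose behavior equals the behavior of M1; i.e., the behavior of M1 cannot be described by any TFSM with timed guards. -/
import Mathlib


open scoped Classical

namespace TFSMPaper

/-- A guard: an interval with integer (natural) endpoints; `hi = none` means `∞`;
`lclosed`/`rclosed` say whether the left/right delimiter is closed. -/
structure Guard where
  lo : ℕ
  hi : Option ℕ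
  lclosed : Bool
  rclosed : Bool
deriving DecidableEq

/-- Membership of a real clock value in a guard. -/
def Guard.mem (g : Guard) (x : ℝ) : Prop :=
  (if g.lclosed then (g.lo : ℝ) ≤ x else (g.lo : ℝ) < x) ∧
  (match g.hi with
    | none => True
    | some n => if g.rclosed then x ≤ (n : ℝ) else x < (n : ℝ))

/-- `J ⊆ g` as subsets of nonnegative reals. -/
def Guard.subset (J g : Guard) : Prop := ∀ x : ℝ, 0 ≤ x → J.mem x → g.mem x

/-- A guard is left-closed and right-open. -/
def Guard.LCRO (g : Guard) : Prop := g.lclosed = true ∧ g.rclosed = false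

/-- The point interval `[n,n]`. -/
def ptG (n : ℕ) : Guard := ⟨n, some n, true, true⟩

/-- The open interval `(n,n+1)`. -/
def opG (n : ℕ) : Guard := ⟨n, some (n + 1), false, false⟩

/-- The unbounded interval `(N,∞)`. -/
def infG (N : ℕ) : Guard := ⟨N, none, false, false⟩

/-- The set `𝕀_N` of abstract intervals. -/
def IN (N : ℕ) : Set Guard :=
  {g | (∃ n ≤ N, g = ptG n) ∨ (∃ n < N, g = opG n) ∨ g = infG N}

/-- All integer constants appearing in `g` are at most `N`. -/
def Guard.boundedBy (g : Guard) (N : ℕ) : Prop :=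
  g.lo ≤ N ∧ ∀ n, g.hi = some n → n ≤ N

/-- A timed word: strictly increasing, nonnegative timestamps. -/
def IsTimedWord {A : Type*} (v : List (A × ℝ)) : Prop :=
  v.Chain' (fun p q => p.2 < q.2) ∧ ∀ p ∈ v, (0 : ℝ) ≤ p.2

/-- Delete the timestamps of a timed word. -/
def untime {A : Type*} (v : List (A × ℝ)) : List A := v.map Prod.fst

/-! ### Untimed FSMs -/

/-- An untimed FSM with input alphabet `Γi`, output alphabet `Γo` and states `R`. -/
structure FSM (Γi Γo R : Type*) where
  trans : R → Γi → Γo → R → Prop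
  init : R

/-- `Run U r v w r'`: from state `r`, reading input word `v`, `U` can produce
output word `w` and reach `r'`. -/
inductive FSM.Run {Γi Γo R : Type*} (U : FSM Γi Γo R) : R → List Γi → List Γo → R → Prop
  | nil (r : R) : FSM.Run U r [] [] r
  | cons {r r' rf : R} {a : Γi} {b : Γo} {v : List Γi} {w : List Γo} :
      U.trans r a b r' → FSM.Run U r' v w rf → FSM.Run U r (a :: v) (b :: w) rf

/-- The behavior of `U`: `w ∈ B_U(v)`. -/
def FSM.Produces {Γi Γo R : Type*} (U : FSM Γi Γo R) (v : List Γi) (w : List Γo) : Prop :=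
  ∃ rf, U.Run U.init v w rf

def FSM.Complete {Γi Γo R : Type*} (U : FSM Γi Γo R) : Prop :=
  ∀ r a, ∃ b r', U.trans r a b r'

def FSM.Deterministic {Γi Γo R : Type*} (U : FSM Γi Γo R) : Prop :=
  ∀ r a b b' r' r'', U.trans r a b r' → U.trans r a b' r'' → b = b' ∧ r' = r''

/-! ### TFSMs with timed guards -/

/-- A TFSM with timed guards. -/
structure TFSMG (S I O : Type*) where
  trans : S → I → Guard → O → S → Prop
  init : S

/-- Input/output transition `(s,x) →(i,o) (s',0)`: some transition with a guard
containing the current clock value `x` fires. -/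
def TFSMG.IOTrans {S I O : Type*} (M : TFSMG S I O) (s : S) (x : ℝ) (i : I) (o : O)
    (s' : S) : Prop :=
  ∃ g, M.trans s i g o s' ∧ g.mem x

/-- `RunFrom M s t v w s'`: starting in state `s` (clock 0) at absolute time `t`,
reading the timed input word `v`, `M` produces the timed output word `w`
(outputs are instantaneous) and reaches `s'`. -/
inductive TFSMG.RunFrom {S I O : Type*} (M : TFSMG S I O) :
    S → ℝ → List (I × ℝ) → List (O × ℝ) → S → Prop
  | nil (s : S) (t : ℝ) : TFSMG.RunFrom M s t [] [] s
  | cons {s s' sf : S} {t t' : ℝ} {i : I} {o : O} {v : List (I × ℝ)} {w : List (O × ℝ)} :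
      M.IOTrans s (t' - t) i o s' → TFSMG.RunFrom M s' t' v w sf →
      TFSMG.RunFrom M s t ((i, t') :: v) ((o, t') :: w) sf

/-- The behavior of `M`: `w ∈ B_M(v)`. -/
def TFSMG.Produces {S I O : Type*} (M : TFSMG S I O) (v : List (I × ℝ))
    (w : List (O × ℝ)) : Prop :=
  ∃ sf, M.RunFrom M.init 0 v w sf

/-- Completeness: in every state, for every input and clock value, some transition fires. -/
def TFSMG.Complete {S I O : Type*} (M : TFSMG S I O) : Prop :=
  ∀ s i (x : ℝ), 0 ≤ x → ∃ g o s', M.trans s i g o s' ∧ g.mem x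

/-- Determinism: at most one input/output transition for each state, input and clock value. -/
def TFSMG.Deterministic {S I O : Type*} (M : TFSMG S I O) : Prop :=
  ∀ s i (x : ℝ) g g' o o' s' s'', M.trans s i g o s' → M.trans s i g' o' s'' →
    g.mem x → g'.mem x → o = o' ∧ s' = s''

/-- `N ≥ max(M)`: every integer constant in the guards of `M` is at most `N`. -/
def TFSMG.boundedBy {S I O : Type*} (M : TFSMG S I O) (N : ℕ) : Prop :=
  ∀ s i g o s', M.trans s i g o s' → g.boundedBy N

/-- The unique interval of `𝕀_N` containing the delay `t`. -/
noncomputable def INdur (N : ℕ) (t : ℝ) : Guard :=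
  if (N : ℝ) < t then infG N
  else if ∃ n : ℕ, (n : ℝ) = t then ptG ⌊t⌋₊
  else opG ⌊t⌋₊

/-- The `𝕀_N`-abstraction of a timed word (the extra `ℝ` argument is the previous
timestamp, initially `0`). -/
noncomputable def INabs {A : Type*} (N : ℕ) : ℝ → List (A × ℝ) → List (A × Guard)
  | _, [] => []
  | t, (a, t') :: v => (a, INdur N (t' - t)) :: INabs N t' v

/-- The abstract FSM `A^N_M` of a TFSM with timed guards. -/
def absFSMG {S I O : Type*} (N : ℕ) (M : TFSMG S I O) : FSM (I × Guard) O S where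
  trans s p o s' := p.2 ∈ IN N ∧ ∃ g, M.trans s p.1 g o s' ∧ p.2.subset g
  init := M.init

/-- `𝕀_N`-bisimulation between a TFSM with timed guards and an untimed FSM. -/
def INBisim {S I O R : Type*} (N : ℕ) (M : TFSMG S I O) (U : FSM (I × Guard) O R)
    (Rel : S → R → Prop) : Prop :=
  ∀ s r, Rel s r →
    (∀ i g o s', M.trans s i g o s' → ∀ J ∈ IN N, J.subset g →
        ∃ r', U.trans r (i, J) o r' ∧ Rel s' r') ∧
    (∀ i J o r', J ∈ IN N → U.trans r (i, J) o r' →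
        ∃ g s', M.trans s i g o s' ∧ J.subset g ∧ Rel s' r')

/-! ### TFSMs with timeouts -/

/-- A TFSM with timeouts; `timeout s = (s', none)` means timeout `∞`. -/
structure TFSMT (S I O : Type*) where
  trans : S → I → O → S → Prop
  init : S
  timeout : S → S × Option ℕ
  timeout_pos : ∀ s n, (timeout s).2 = some n → 0 < n

/-- The timed transition relation `(s,x) →t (s',x')`. -/
inductive TFSMT.Elapse {S I O : Type*} (M : TFSMT S I O) : S → ℝ → ℝ → S → ℝ → Prop
  | stay {s : S} {x t : ℝ} : 0 ≤ x → 0 ≤ t →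
      (∀ n, (M.timeout s).2 = some n → x + t < n) → TFSMT.Elapse M s x t s (x + t)
  | tmo {s : S} {x t : ℝ} {n : ℕ} : 0 ≤ x → 0 ≤ t → (M.timeout s).2 = some n →
      x + t = n → TFSMT.Elapse M s x t (M.timeout s).1 0
  | comp {s s' s'' : S} {x x' x'' t₁ t₂ : ℝ} :
      TFSMT.Elapse M s x t₁ s' x' → TFSMT.Elapse M s' x' t₂ s'' x'' →
      TFSMT.Elapse M s x (t₁ + t₂) s'' x''

/-- Input/output transition `(s,x) →(i,o) (s',0)`. -/
def TFSMT.IOTrans {S I O : Type*} (M : TFSMT S I O) (s : S) (x : ℝ) (i : I) (o : O)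
    (s' : S) : Prop :=
  M.trans s i o s' ∧ 0 ≤ x ∧ ∀ n, (M.timeout s).2 = some n → x < n

/-- Run of a TFSM with timeouts on a timed input word. -/
inductive TFSMT.RunFrom {S I O : Type*} (M : TFSMT S I O) :
    S → ℝ → List (I × ℝ) → List (O × ℝ) → S → Prop
  | nil (s : S) (t : ℝ) : TFSMT.RunFrom M s t [] [] s
  | cons {s s'' s' sf : S} {x t t' : ℝ} {i : I} {o : O} {v : List (I × ℝ)} {w : List (O × ℝ)} :
      M.Elapse s 0 (t' - t) s'' x → M.IOTrans s'' x i o s' →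
      TFSMT.RunFrom M s' t' v w sf →
      TFSMT.RunFrom M s t ((i, t') :: v) ((o, t') :: w) sf

/-- The behavior of `M`: `w ∈ B_M(v)`. -/
def TFSMT.Produces {S I O : Type*} (M : TFSMT S I O) (v : List (I × ℝ))
    (w : List (O × ℝ)) : Prop :=
  ∃ sf, M.RunFrom M.init 0 v w sf

def TFSMT.Complete {S I O : Type*} (M : TFSMT S I O) : Prop :=
  ∀ s i, ∃ o s', M.trans s i o s'

def TFSMT.Deterministic {S I O : Type*} (M : TFSMT S I O) : Prop :=
  ∀ s i o o' s' s'', M.trans s i o s' → M.trans s i o' s'' → o = o' ∧ s' = s''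

/-- The `𝟙`-abstraction of a timed word: `none` is the delay symbol `𝟙`
(the extra `ℝ` argument is the previous timestamp, initially `0`). -/
noncomputable def oneAbs {A : Type*} : ℝ → List (A × ℝ) → List (Option A)
  | _, [] => []
  | t, (a, t') :: v => List.replicate ⌊t' - t⌋₊ none ++ some a :: oneAbs t' v

/-- `𝟙`-bisimulation between a TFSM with timeouts and an untimed FSM
(`none` plays the role of `𝟙` in both alphabets). -/
def OneBisim {S I O R : Type*} (M : TFSMT S I O) (U : FSM (Option I) (Option O) R)
    (Rel : S → ℝ → R → Prop) : Prop :=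
  ∀ s x r, Rel s x r →
    (∀ t s' x', 0 ≤ t → ⌊x + t⌋₊ = ⌊x + 1⌋₊ → M.Elapse s x t s' x' →
        ∃ r', U.trans r none none r' ∧ Rel s' x' r') ∧
    (∀ r', U.trans r none none r' → ∀ t, 0 ≤ t → ⌊x + t⌋₊ = ⌊x + 1⌋₊ →
        ∃ s' x', M.Elapse s x t s' x' ∧ Rel s' x' r') ∧
    (∀ t i o s', 0 ≤ t → ⌊x⌋₊ = ⌊x + t⌋₊ → M.Elapse s x t s (x + t) →
        M.IOTrans s (x + t) i o s' → ∃ r', U.trans r (some i) (some o) r' ∧ Rel s' 0 r') ∧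
    (∀ i o r', U.trans r (some i) (some o) r' → ∀ t, 0 ≤ t → ⌊x⌋₊ = ⌊x + t⌋₊ →
        ∃ s', M.Elapse s x t s (x + t) ∧ M.IOTrans s (x + t) i o s' ∧ Rel s' 0 r')

/-- The `𝟙`-abstract FSM `A_M` of a TFSM with timeouts. -/
def oneAbsFSM {S I O : Type*} (M : TFSMT S I O) : FSM (Option I) (Option O) (S × ℕ) where
  trans p a b q :=
    (a = none ∧ b = none ∧
      ((q.1 = p.1 ∧ q.2 = p.2 + 1 ∧ ∃ m, (M.timeout p.1).2 = some m ∧ p.2 + 1 < m) ∨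
       (M.timeout p.1 = (q.1, some (p.2 + 1)) ∧ q.2 = 0) ∨
       (p.2 = 0 ∧ (M.timeout p.1).2 = none ∧ q = p))) ∨
    (∃ i o, a = some i ∧ b = some o ∧ M.trans p.1 i o q.1 ∧ q.2 = 0)
  init := (M.init, 0)

/-- One step of the timeout function (only from states with a finite timeout). -/
def TFSMT.TimeoutStep {S I O : Type*} (M : TFSMT S I O) (s s' : S) : Prop :=
  (M.timeout s).2 ≠ none ∧ s' = (M.timeout s).1

/-- No cycles of timeout transitions. -/
def TFSMT.LoopFree {S I O : Type*} (M : TFSMT S I O) : Prop :=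
  ∀ s, ¬ Relation.TransGen M.TimeoutStep s s

/-! ### TFSMs with timed guards and timeouts -/

/-- A TFSM with both timed guards and timeouts. -/
structure TFSMGT (S I O : Type*) where
  trans : S → I → Guard → O → S → Prop
  init : S
  timeout : S → S × Option ℕ

/-- The timed transition relation `(s,x) →t (s',x')`. -/
inductive TFSMGT.Elapse {S I O : Type*} (M : TFSMGT S I O) : S → ℝ → ℝ → S → ℝ → Prop
  | stay {s : S} {x t : ℝ} : 0 ≤ x → 0 ≤ t →
      (∀ n, (M.timeout s).2 = some n → x + t < n) → TFSMGT.Elapse M s x t s (x + t)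
  | tmo {s : S} {x t : ℝ} {n : ℕ} : 0 ≤ x → 0 ≤ t → (M.timeout s).2 = some n →
      x + t = n → TFSMGT.Elapse M s x t (M.timeout s).1 0
  | comp {s s' s'' : S} {x x' x'' t₁ t₂ : ℝ} :
      TFSMGT.Elapse M s x t₁ s' x' → TFSMGT.Elapse M s' x' t₂ s'' x'' →
      TFSMGT.Elapse M s x (t₁ + t₂) s'' x''

/-- Input/output transition `(s,x) →(i,o) (s',0)`. -/
def TFSMGT.IOTrans {S I O : Type*} (M : TFSMGT S I O) (s : S) (x : ℝ) (i : I) (o : O)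
    (s' : S) : Prop :=
  (∃ g, M.trans s i g o s' ∧ g.mem x) ∧ 0 ≤ x ∧ ∀ n, (M.timeout s).2 = some n → x < n

/-- Run of a TFSM with timed guards and timeouts on a timed input word. -/
inductive TFSMGT.RunFrom {S I O : Type*} (M : TFSMGT S I O) :
    S → ℝ → List (I × ℝ) → List (O × ℝ) → S → Prop
  | nil (s : S) (t : ℝ) : TFSMGT.RunFrom M s t [] [] s
  | cons {s s'' s' sf : S} {x t t' : ℝ} {i : I} {o : O} {v : List (I × ℝ)} {w : List (O × ℝ)} :
      M.Elapse s 0 (t' - t) s'' x → M.IOTrans s'' x i o s' →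
      TFSMGT.RunFrom M s' t' v w sf →
      TFSMGT.RunFrom M s t ((i, t') :: v) ((o, t') :: w) sf

def TFSMGT.Produces {S I O : Type*} (M : TFSMGT S I O) (v : List (I × ℝ))
    (w : List (O × ℝ)) : Prop :=
  ∃ sf, M.RunFrom M.init 0 v w sf

def TFSMGT.Complete {S I O : Type*} (M : TFSMGT S I O) : Prop :=
  ∀ s i (x : ℝ), 0 ≤ x → (∀ n, (M.timeout s).2 = some n → x < n) →
    ∃ g o s', M.trans s i g o s' ∧ g.mem x

def TFSMGT.Deterministic {S I O : Type*} (M : TFSMGT S I O) : Prop :=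
  ∀ s i (x : ℝ) g g' o o' s' s'', M.trans s i g o s' → M.trans s i g' o' s'' →
    g.mem x → g'.mem x → o = o' ∧ s' = s''

/-- `N ≥ max(M)`: all guard constants and all finite timeouts of `M` are at most `N`. -/
def TFSMGT.boundedBy {S I O : Type*} (M : TFSMGT S I O) (N : ℕ) : Prop :=
  (∀ s i g o s', M.trans s i g o s' → g.boundedBy N) ∧
  (∀ s m, (M.timeout s).2 = some m → m ≤ N)

/-- `N = max(M)`: `N` is the greatest integer constant appearing in `M`. -/
def TFSMGT.maxConst {S I O : Type*} (M : TFSMGT S I O) (N : ℕ) : Prop :=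
  M.boundedBy N ∧ ∀ N', M.boundedBy N' → N ≤ N'

/-- Number of `𝕥` symbols abstracting a delay `t`. -/
noncomputable def tNum (t : ℝ) : ℕ :=
  if ∃ n : ℕ, (n : ℝ) = t then 2 * ⌊t⌋₊ else 2 * ⌊t⌋₊ + 1

/-- The `𝕥`-abstraction of a timed word: `none` is the delay symbol `𝕥`
(the extra `ℝ` argument is the previous timestamp, initially `0`). -/
noncomputable def tAbs {A : Type*} : ℝ → List (A × ℝ) → List (Option A)
  | _, [] => []
  | t, (a, t') :: v => List.replicate (tNum (t' - t)) none ++ some a :: tAbs t' v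

/-- `𝕥`-bisimulation between a TFSM with timed guards and timeouts and an untimed FSM. -/
def TBisim {S I O R : Type*} (M : TFSMGT S I O) (U : FSM (Option I) (Option O) R)
    (Rel : S → ℝ → R → Prop) : Prop :=
  ∀ s x r, Rel s x r →
    (∀ t s' x', 0 < t → t < 1 → ((∃ n : ℕ, (n : ℝ) = x) ∨ ∃ n : ℕ, (n : ℝ) = x + t) →
        M.Elapse s x t s' x' → ∃ r', U.trans r none none r' ∧ Rel s' x' r') ∧
    (∀ r', U.trans r none none r' →
        ∀ t, 0 < t → t < 1 → ((∃ n : ℕ, (n : ℝ) = x) ∨ ∃ n : ℕ, (n : ℝ) = x + t) →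
        ∃ s' x', M.Elapse s x t s' x' ∧ Rel s' x' r') ∧
    (∀ i o s', M.IOTrans s x i o s' → ∃ r', U.trans r (some i) (some o) r' ∧ Rel s' 0 r') ∧
    (∀ i o r', U.trans r (some i) (some o) r' →
        ∃ s', M.IOTrans s x i o s' ∧ Rel s' 0 r')

/-- The `𝕥`-abstract FSM `A_M` of a TFSM with timed guards and timeouts. -/
def tAbsFSM {S I O : Type*} (N : ℕ) (M : TFSMGT S I O) :
    FSM (Option I) (Option O) (S × Guard) where
  trans p a b q :=
    (a = none ∧ b = none ∧
      ((∃ n, p.2 = ptG n ∧ q = (p.1, opG n) ∧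
          ∀ m, (M.timeout p.1).2 = some m → n + 1 ≤ m) ∨
       (∃ n, p.2 = opG n ∧ q = (p.1, ptG (n + 1)) ∧
          ∀ m, (M.timeout p.1).2 = some m → n + 1 < m) ∨
       (∃ n, p.2 = opG n ∧ M.timeout p.1 = (q.1, some (n + 1)) ∧ q.2 = ptG 0) ∨
       (p.2 = infG N ∧ (M.timeout p.1).2 = none ∧ q = p))) ∨
    (∃ i o, a = some i ∧ b = some o ∧ q.2 = ptG 0 ∧
      ∃ g, M.trans p.1 i g o q.1 ∧ p.2.subset g)
  init := (M.init, ptG 0)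

/-- The TFSM with timeouts `M1`: states `{q0,q1}` (`false = q0`, `true = q1`),
inputs `{i} = Unit`, outputs `{o1,o2}` (`false = o1`, `true = o2`),
self-loop transitions `(q0,i,o1,q0)`, `(q1,i,o2,q1)`, timeouts
`Δ(q0) = (q1,1)`, `Δ(q1) = (q0,1)`. -/
def M1 : TFSMT Bool Unit Bool where
  trans s _ o s' := s' = s ∧ o = s
  init := false
  timeout s := (!s, some 1)
  timeout_pos := by intro s n h; injection h with h; omega

lemma M1_elapse_nat : ∀ k : ℕ, M1.Elapse false 0 (k : ℝ) (decide (k % 2 = 1)) 0 := by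
  intro k
  induction k with
  | zero =>
      have h := TFSMT.Elapse.stay (M := M1) (s := false) (x := 0) (t := 0) le_rfl le_rfl
        (by intro n hn; simp [M1] at hn; subst hn; norm_num)
      simpa using h
  | succ k ih =>
      have htmo : M1.Elapse (decide (k % 2 = 1)) 0 1 (!(decide (k % 2 = 1))) 0 := by
        have h := TFSMT.Elapse.tmo (M := M1) (s := decide (k % 2 = 1)) (x := 0) (t := 1)
          (n := 1) le_rfl zero_le_one (by simp [M1]) (by norm_num)
        simpa [M1] using h
      have hcomp := TFSMT.Elapse.comp ih htmo
      have hb : (!(decide (k % 2 = 1))) = decide ((k + 1) % 2 = 1) := by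
        rcases Nat.mod_two_eq_zero_or_one k with h | h <;> simp [Nat.add_mod, h]
      rw [hb] at hcomp
      have : ((k : ℝ) + 1) = ((k + 1 : ℕ) : ℝ) := by push_cast; ring
      rwa [this] at hcomp

lemma M1_produces (k : ℕ) :
    M1.Produces [((), (k : ℝ) + 1/2)] [((decide (k % 2 = 1)), (k : ℝ) + 1/2)] := by
  refine ⟨decide (k % 2 = 1), ?_⟩
  refine TFSMT.RunFrom.cons (s'' := decide (k % 2 = 1)) (x := 1/2) ?_ ?_
    (TFSMT.RunFrom.nil _ _)
  · have h1 := M1_elapse_nat k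
    have h2 : M1.Elapse (decide (k % 2 = 1)) 0 (1/2) (decide (k % 2 = 1)) (1/2) := by
      have h := TFSMT.Elapse.stay (M := M1) (s := decide (k % 2 = 1)) (x := 0) (t := 1/2)
        le_rfl (by norm_num) (by intro n hn; simp [M1] at hn; subst hn; norm_num)
      simpa using h
    have h3 := TFSMT.Elapse.comp h1 h2
    have he : ((k : ℝ) + 1/2 - 0) = (k : ℝ) + 1/2 := by ring
    rwa [he]
  · exact ⟨⟨rfl, rfl⟩, by norm_num, by intro n hn; simp [M1] at hn; subst hn; norm_num⟩

lemma guard_mem_large {g : Guard} {N : ℕ} (hlo : g.lo ≤ N) (hhi : ∀ n, g.hi = some n → n ≤ N)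
    {x : ℝ} (hx : g.mem x) (hxN : (N : ℝ) < x) : ∀ y : ℝ, (N : ℝ) < y → g.mem y := by
  intro y hy
  have hhi' : g.hi = none := by
    cases hh : g.hi with
    | none => rfl
    | some n =>
        exfalso
        have hn : n ≤ N := hhi n hh
        have h2 := hx.2
        rw [hh] at h2
        have : x ≤ (n : ℝ) := by
          by_cases hc : g.rclosed <;> simp [hc] at h2
          · exact h2
          · exact le_of_lt h2
        have : x ≤ (N : ℝ) := this.trans (by exact_mod_cast hn)
        linarith
  constructor
  · have : (g.lo : ℝ) < y := lt_of_le_of_lt (by exact_mod_cast hlo) hy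
    by_cases hc : g.lclosed <;> simp [hc]
    · exact le_of_lt this
    · exact this
  · rw [hhi']; trivial

lemma produces_single {S' : Type} (M' : TFSMG S' Unit Bool) {t : ℝ} {b : Bool}
    (h : M'.Produces [((), t)] [(b, t)]) :
    ∃ g s', M'.trans M'.init () g b s' ∧ g.mem t := by
  obtain ⟨sf, hrun⟩ := h
  cases hrun with
  | cons hio hrest =>
      obtain ⟨g, hg, hm⟩ := hio
      exact ⟨g, _, hg, by simpa using hm⟩

/-- No complete deterministic TFSM with timed guards (with a
finite state set and finitely many transitions) has the same behavior as `M1`. -/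
theorem statement14 :
    ∀ (S' : Type) [Finite S'] (M' : TFSMG S' Unit Bool),
      {q : S' × Unit × Guard × Bool × S' |
          M'.trans q.1 q.2.1 q.2.2.1 q.2.2.2.1 q.2.2.2.2}.Finite →
      M'.Complete → M'.Deterministic →
      ¬ (∀ (v : List (Unit × ℝ)) (w : List (Bool × ℝ)), IsTimedWord v →
          (M1.Produces v w ↔ M'.Produces v w)) := by
  intro S' _ M' hF hc hdet h
  -- bound all guard constants by N
  obtain ⟨N, hN⟩ := (hF.image
    (fun q => max q.2.2.1.lo (q.2.2.1.hi.getD 0))).bddAbove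
  have hbd : ∀ s i g o s', M'.trans s i g o s' →
      g.lo ≤ N ∧ ∀ n, g.hi = some n → n ≤ N := by
    intro s i g o s' htr
    have hmem : (s, i, g, o, s') ∈
        {q : S' × Unit × Guard × Bool × S' |
          M'.trans q.1 q.2.1 q.2.2.1 q.2.2.2.1 q.2.2.2.2} := htr
    have := hN (Set.mem_image_of_mem _ hmem)
    simp only at this
    constructor
    · exact le_trans (le_max_left _ _) this
    · intro n hn
      have : g.hi.getD 0 ≤ N := le_trans (le_max_right _ _) this
      rwa [hn] at this
  -- the two probe times
  have htw : ∀ k : ℕ, IsTimedWord [((), (k : ℝ) + 1/2)] := by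
    intro k
    refine ⟨List.isChain_singleton _, ?_⟩
    intro p hp
    simp at hp
    rw [hp]
    positivity
  have h1 := (h [((), ((N + 1 : ℕ) : ℝ) + 1/2)] _ (htw (N + 1))).mp (M1_produces (N + 1))
  have h2 := (h [((), ((N + 2 : ℕ) : ℝ) + 1/2)] _ (htw (N + 2))).mp (M1_produces (N + 2))
  obtain ⟨g1, s1, htr1, hm1⟩ := produces_single M' h1
  obtain ⟨g2, s2, htr2, hm2⟩ := produces_single M' h2
  have hb1 := hbd _ _ _ _ _ htr1
  have hlt1 : (N : ℝ) < ((N + 1 : ℕ) : ℝ) + 1/2 := by push_cast; linarith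
  have hlt2 : (N : ℝ) < ((N + 2 : ℕ) : ℝ) + 1/2 := by push_cast; linarith
  have hm1' : g1.mem (((N + 2 : ℕ) : ℝ) + 1/2) :=
    guard_mem_large hb1.1 hb1.2 hm1 hlt1 _ hlt2
  have := hdet M'.init () (((N + 2 : ℕ) : ℝ) + 1/2) g1 g2 _ _ _ _ htr1 htr2 hm1' hm2
  have hodd : decide ((N + 1) % 2 = 1) = decide ((N + 2) % 2 = 1) := this.1
  rcases Nat.mod_two_eq_zero_or_one N with hp | hp <;>
    simp [Nat.add_mod, hp] at hodd

end TFSMPaper
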